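/- arXiv:1502.01040 — 4 statements merged into one kernel-verified Lean document; each statement's English description precedes it below -/
import Mathlib

section
/- Work in the polynomial ring S = ℂ[x₁, x₃, x₆, y₀, y₁, …, y₆] graded by ℤ⁷ with the E₇ weights. The invariant ring Sᵀ (the ℂ-subalgebra of polynomials each of whose monomials has weight 0) equals the ℂ-subalgebra generated by the four monomials Z₁ = x₃ y₀⁴ y₁² y₂³ y₃² y₄³ y₅² y₆, Z₂ = x₁² y₀¹² y₁⁷ y₂⁸ y₃⁴ y₄⁹ y₅⁶ y₆³, Z₃ = x₁ x₆ y₀⁹ y₁⁵ y₂⁶ y₃³ y₄⁷ y₅⁵ y₆³, Z₄ = x₆² y₀⁶ y₁³ y₂⁴ y₃² y₄⁵ y₅⁴ y₆³; and the kernel of the ℂ-algebra homomorphism ℂ[Z₁, Z₂, Z₃, Z₄] → S sending the variables Z_i to these monomials is the principal ideal generated by Z₃² − Z₂Z₄. Consequently Sᵀ ≅ ℂ[Z₁, Z₂, Z₃, Z₄]/(Z₃² − Z₂Z₄). -/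
open MvPolynomial

/-- The subalgebra of an `Fin n`-multigraded polynomial ring consisting of the polynomials
all of whose monomials have weight zero (the ring of invariants of the torus action
with weights `w`). -/
noncomputable def invariants {m n : ℕ} (w : Fin m → Fin n → ℤ) :
    Subalgebra ℂ (MvPolynomial (Fin m) ℂ) where
  carrier := {p | ∀ d ∈ p.support, ∀ i : Fin n, ∑ v, (d v : ℤ) * w v i = 0}
  zero_mem' := by
    intro d hd i
    simp at hd
  one_mem' := by
    intro d hd i
    have hd' : d = 0 := by
      by_contra h
      have := MvPolynomial.mem_support_iff.mp hd
      rw [show (1 : MvPolynomial (Fin m) ℂ) = C 1 from (map_one C).symm,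
        MvPolynomial.coeff_C, if_neg (Ne.symm h)] at this
      exact this rfl
    subst hd'
    simp
  add_mem' := by
    intro p q hp hq d hd i
    rcases Finset.mem_union.mp (MvPolynomial.support_add hd) with h | h
    · exact hp d h i
    · exact hq d h i
  mul_mem' := by
    intro p q hp hq d hd i
    obtain ⟨a, ha, b, hb, rfl⟩ := Finset.mem_add.mp (MvPolynomial.support_mul p q hd)
    have key : ∀ v : Fin m, (((a + b) v : ℤ)) * w v i
        = (a v : ℤ) * w v i + (b v : ℤ) * w v i := by
      intro v
      rw [Finsupp.add_apply]
      push_cast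
      ring
    rw [Finset.sum_congr rfl fun v _ => key v, Finset.sum_add_distrib,
      hp a ha i, hq b hb i, add_zero]
  algebraMap_mem' := by
    intro r d hd i
    have hd' : d = 0 := by
      by_contra h
      have := MvPolynomial.mem_support_iff.mp hd
      rw [MvPolynomial.algebraMap_eq, MvPolynomial.coeff_C, if_neg (Ne.symm h)] at this
      exact this rfl
    subst hd'
    simp

open MvPolynomial

/-- Weights of the torus action for the `E₇` singularity: the variables of
`S = ℂ[x₁, x₃, x₆, y₀, …, y₆]` are indexed by `Fin 10` with `0 ↦ x₁`, `1 ↦ x₃`,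
`2 ↦ x₆`, `3+m ↦ y_m`; the rows below are `w(x₁) = e₁`, `w(x₃) = e₃`, `w(x₆) = e₆`,
`w(y₀) = -2e₀+e₁+e₂+e₄`, `w(y₁) = e₀-2e₁`, `w(y₂) = e₀-2e₂+e₃`, `w(y₃) = e₂-2e₃`,
`w(y₄) = e₀-2e₄+e₅`, `w(y₅) = e₄-2e₅+e₆`, `w(y₆) = e₅-2e₆`. -/
def wE7 : Fin 10 → Fin 7 → ℤ :=
  ![![0, 1, 0, 0, 0, 0, 0],
    ![0, 0, 0, 1, 0, 0, 0],
    ![0, 0, 0, 0, 0, 0, 1],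
    ![-2, 1, 1, 0, 1, 0, 0],
    ![1, -2, 0, 0, 0, 0, 0],
    ![1, 0, -2, 1, 0, 0, 0],
    ![0, 0, 1, -2, 0, 0, 0],
    ![1, 0, 0, 0, -2, 1, 0],
    ![0, 0, 0, 0, 1, -2, 1],
    ![0, 0, 0, 0, 0, 1, -2]]

/-- `Z₁ = x₃ y₀⁴ y₁² y₂³ y₃² y₄³ y₅² y₆`. -/
noncomputable def E7Z₁ : MvPolynomial (Fin 10) ℂ :=
  X 1 * X 3 ^ 4 * X 4 ^ 2 * X 5 ^ 3 * X 6 ^ 2 * X 7 ^ 3 * X 8 ^ 2 * X 9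

/-- `Z₂ = x₁² y₀¹² y₁⁷ y₂⁸ y₃⁴ y₄⁹ y₅⁶ y₆³`. -/
noncomputable def E7Z₂ : MvPolynomial (Fin 10) ℂ :=
  X 0 ^ 2 * X 3 ^ 12 * X 4 ^ 7 * X 5 ^ 8 * X 6 ^ 4 * X 7 ^ 9 * X 8 ^ 6 * X 9 ^ 3

/-- `Z₃ = x₁ x₆ y₀⁹ y₁⁵ y₂⁶ y₃³ y₄⁷ y₅⁵ y₆³`. -/
noncomputable def E7Z₃ : MvPolynomial (Fin 10) ℂ :=
  X 0 * X 2 * X 3 ^ 9 * X 4 ^ 5 * X 5 ^ 6 * X 6 ^ 3 * X 7 ^ 7 * X 8 ^ 5 * X 9 ^ 3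

/-- `Z₄ = x₆² y₀⁶ y₁³ y₂⁴ y₃² y₄⁵ y₅⁴ y₆³`. -/
noncomputable def E7Z₄ : MvPolynomial (Fin 10) ℂ :=
  X 2 ^ 2 * X 3 ^ 6 * X 4 ^ 3 * X 5 ^ 4 * X 6 ^ 2 * X 7 ^ 5 * X 8 ^ 4 * X 9 ^ 3

/-!
Write `g₁, …, g₄` for the exponent vectors of `Z₁, …, Z₄`. Solving the weight equations shows
that an invariant exponent vector `d` equals
`d(x₃) g₁ + ⌊d(x₁)/2⌋ g₂ + (d(x₁) mod 2) g₃ + ⌊d(x₆)/2⌋ g₄`, so every invariant monomial is a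
monomial in the `Zᵢ`. For the kernel, the relation `Z₃² = Z₂Z₄` rewrites every monomial in the
`Zᵢ` into one in which `Z₃` occurs at most once, and on such monomials `e ↦ ∑ eⱼ gⱼ` is
injective (the exponents of `x₃, x₁, x₆` already recover `e`); hence a polynomial in the kernel
reduces to `0`.
-/

namespace MvPolynomial

section MonomialMap

variable {R σ ι : Type*} [CommRing R] [Fintype ι] (g : ι → σ →₀ ℕ)

theorem aeval_monomial_monomial_one (e : ι →₀ ℕ) (a : R) :
    aeval (fun j => monomial (g j) (1 : R)) (monomial e a) = monomial (∑ j, e j • g j) a := by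
  rw [aeval_monomial, monomial_sum_index, Finsupp.prod_fintype _ _ (fun _ => pow_zero _)]
  simp only [monomial_pow, one_pow, algebraMap_eq]

theorem coeff_aeval_monomial_one_of_injOn {T : Set (ι →₀ ℕ)}
    (hT : Set.InjOn (fun e => ∑ j, e j • g j) T) {f : MvPolynomial ι R} (hf : ↑f.support ⊆ T)
    {e : ι →₀ ℕ} (he : e ∈ T) :
    coeff (∑ j, e j • g j) (aeval (fun j => monomial (g j) (1 : R)) f) = coeff e f := by
  classical
  conv_lhs => rw [← support_sum_monomial_coeff f]
  simp only [map_sum, aeval_monomial_monomial_one, coeff_sum]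
  rw [Finset.sum_eq_single e]
  · rw [coeff_monomial, if_pos rfl]
  · intro b hb hbe
    rw [coeff_monomial, if_neg fun h => hbe (hT (hf hb) he h)]
  · intro he'
    rw [notMem_support_iff.mp he', monomial_zero, coeff_zero]

theorem eq_zero_of_aeval_monomial_one_eq_zero {T : Set (ι →₀ ℕ)}
    (hT : Set.InjOn (fun e => ∑ j, e j • g j) T) {f : MvPolynomial ι R} (hf : ↑f.support ⊆ T)
    (h : aeval (fun j => monomial (g j) (1 : R)) f = 0) : f = 0 := by
  ext e
  by_cases he : e ∈ f.support
  · rw [← coeff_aeval_monomial_one_of_injOn g hT hf (hf he), h, coeff_zero, coeff_zero]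
  · rw [notMem_support_iff.mp he, coeff_zero]

theorem ker_aeval_monomial_one_eq {I : Ideal (MvPolynomial ι R)}
    (hI : I ≤ RingHom.ker (aeval fun j => monomial (g j) (1 : R)))
    (red : (ι →₀ ℕ) → ι →₀ ℕ) (hred : ∀ e, monomial e (1 : R) - monomial (red e) 1 ∈ I)
    (hinj : Set.InjOn (fun e => ∑ j, e j • g j) (Set.range red)) :
    RingHom.ker (aeval fun j => monomial (g j) (1 : R)) = I := by
  classical
  refine le_antisymm (fun f hf => ?_) hI
  set f' := ∑ e ∈ f.support, monomial (red e) (coeff e f)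
  have hdiff : f - f' ∈ I := by
    rw [← support_sum_monomial_coeff f, ← Finset.sum_sub_distrib]
    refine Ideal.sum_mem _ fun e _ => ?_
    have := I.mul_mem_left (C (coeff e f)) (hred e)
    rwa [mul_sub, C_mul_monomial, C_mul_monomial, mul_one] at this
  have hf' : f' = 0 := by
    refine eq_zero_of_aeval_monomial_one_eq_zero g hinj (T := Set.range red) ?_ ?_
    · intro e he
      obtain ⟨b, -, hb⟩ := Finset.mem_biUnion.mp (support_sum he)
      exact ⟨b, (Finset.mem_singleton.mp (support_monomial_subset hb)).symm⟩
    · have := hI hdiff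
      rwa [RingHom.mem_ker, map_sub, RingHom.mem_ker.mp hf, zero_sub, neg_eq_zero] at this
  simpa [hf'] using hdiff

end MonomialMap

theorem monomial_add_nsmul_sub_mem_span {R σ : Type*} [CommRing R] (e a b : σ →₀ ℕ) (n : ℕ) :
    monomial (e + n • a) (1 : R) - monomial (e + n • b) 1
      ∈ Ideal.span {monomial a (1 : R) - monomial b 1} := by
  rw [Ideal.mem_span_singleton]
  have h : monomial (e + n • a) (1 : R) - monomial (e + n • b) 1
      = monomial e 1 * ((monomial a 1) ^ n - (monomial b 1) ^ n) := by
    simp only [mul_sub, monomial_pow, monomial_mul, one_pow, mul_one]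
  rw [h]
  exact (sub_dvd_pow_sub_pow _ _ n).mul_left _

end MvPolynomial

section Invariants

variable {m n : ℕ} (w : Fin m → Fin n → ℤ)

theorem monomial_mem_invariants {d : Fin m →₀ ℕ} (hd : ∀ i, ∑ v, (d v : ℤ) * w v i = 0) (c : ℂ) :
    monomial d c ∈ invariants w := fun d' hd' => by
  rw [Finset.mem_singleton.mp (support_monomial_subset hd')]
  exact hd

theorem invariants_eq_range_aeval_monomial_one {ι : Type*} [Fintype ι] (g : ι → Fin m →₀ ℕ)
    (hg : ∀ j i, ∑ v, (g j v : ℤ) * w v i = 0)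
    (hgen : ∀ d : Fin m →₀ ℕ, (∀ i, ∑ v, (d v : ℤ) * w v i = 0) →
      ∃ k : ι →₀ ℕ, d = ∑ j, k j • g j) :
    invariants w = (aeval fun j => monomial (g j) (1 : ℂ)).range := by
  refine le_antisymm (fun p hp => ?_) ?_
  · rw [← support_sum_monomial_coeff p]
    refine Subalgebra.sum_mem _ fun d hd => ?_
    obtain ⟨k, rfl⟩ := hgen d (hp d hd)
    exact ⟨monomial k (coeff _ p), aeval_monomial_monomial_one g k _⟩
  · rw [← Algebra.adjoin_range_eq_range_aeval, Algebra.adjoin_le_iff]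
    rintro _ ⟨j, rfl⟩
    exact monomial_mem_invariants w (hg j) 1

end Invariants

noncomputable def expE7 : Fin 4 → Fin 10 →₀ ℕ := fun j => Finsupp.equivFunOnFinite.symm
  (![![0, 1, 0, 4, 2, 3, 2, 3, 2, 1], ![2, 0, 0, 12, 7, 8, 4, 9, 6, 3],
    ![1, 0, 1, 9, 5, 6, 3, 7, 5, 3], ![0, 0, 2, 6, 3, 4, 2, 5, 4, 3]] j)

theorem E7Z_eq_monomial :
    ![E7Z₁, E7Z₂, E7Z₃, E7Z₄] = fun j => monomial (expE7 j) (1 : ℂ) := by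
  funext j
  fin_cases j <;> simp [E7Z₁, E7Z₂, E7Z₃, E7Z₄, expE7, monomial_eq, Finsupp.prod_fintype,
    Fin.prod_univ_succ, mul_assoc]

theorem weight_expE7 (j : Fin 4) (i : Fin 7) : ∑ v, (expE7 j v : ℤ) * wE7 v i = 0 := by
  revert j i
  decide

theorem exists_eq_sum_expE7 (d : Fin 10 →₀ ℕ) (hd : ∀ i, ∑ v, (d v : ℤ) * wE7 v i = 0) :
    ∃ k : Fin 4 →₀ ℕ, d = ∑ j, k j • expE7 j := by
  have h0 := hd 0; have h1 := hd 1; have h2 := hd 2; have h3 := hd 3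
  have h4 := hd 4; have h5 := hd 5; have h6 := hd 6
  simp [Fin.sum_univ_succ, wE7] at h0 h1 h2 h3 h4 h5 h6
  refine ⟨Finsupp.equivFunOnFinite.symm ![d 1, d 0 / 2, d 0 % 2, d 2 / 2], ?_⟩
  ext v
  fin_cases v <;> simp [Fin.sum_univ_succ, expE7] <;> omega

theorem injOn_sum_expE7 : Set.InjOn (fun k : Fin 4 →₀ ℕ => ∑ j, k j • expE7 j) {k | k 2 ≤ 1} := by
  intro a ha b hb hab
  have h0 := congrArg (· 0) hab
  have h1 := congrArg (· 1) hab
  have h2 := congrArg (· 2) hab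
  simp [Fin.sum_univ_succ, expE7] at h0 h1 h2 ha hb
  ext j
  fin_cases j <;> simp <;> omega

-- Trades `Z₃ ^ (2k)` for `(Z₂ Z₄) ^ k` with `k = ⌊e 2 / 2⌋` (index `j` stands for `Z_{j+1}`).
noncomputable def redE7 (e : Fin 4 →₀ ℕ) : Fin 4 →₀ ℕ :=
  e - (e 2 / 2) • Finsupp.single 2 2 + (e 2 / 2) • (Finsupp.single 1 1 + Finsupp.single 3 1)

theorem redE7_apply_two_le (e : Fin 4 →₀ ℕ) : redE7 e 2 ≤ 1 := by
  simp [redE7]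
  omega

theorem monomial_sub_monomial_redE7_mem (e : Fin 4 →₀ ℕ) :
    monomial e (1 : ℂ) - monomial (redE7 e) 1 ∈ Ideal.span {X 2 ^ 2 - X 1 * X 3} := by
  have hX : (X 2 ^ 2 - X 1 * X 3 : MvPolynomial (Fin 4) ℂ)
      = monomial (Finsupp.single 2 2) 1 - monomial (Finsupp.single 1 1 + Finsupp.single 3 1) 1 := by
    simp only [X, monomial_pow, monomial_mul, one_pow, mul_one, Finsupp.smul_single, smul_eq_mul]
  have hle : (e 2 / 2) • Finsupp.single (2 : Fin 4) 2 ≤ e := by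
    rw [Finsupp.smul_single, Finsupp.single_le_iff]
    simp only [smul_eq_mul]
    omega
  have h := monomial_add_nsmul_sub_mem_span (R := ℂ) (e - (e 2 / 2) • Finsupp.single 2 2)
    (Finsupp.single 2 2) (Finsupp.single 1 1 + Finsupp.single 3 1) (e 2 / 2)
  rw [tsub_add_cancel_of_le hle] at h
  rwa [hX]

theorem ker_aeval_E7Z :
    RingHom.ker (aeval ![E7Z₁, E7Z₂, E7Z₃, E7Z₄] :
        MvPolynomial (Fin 4) ℂ →ₐ[ℂ] MvPolynomial (Fin 10) ℂ)
      = Ideal.span {X 2 ^ 2 - X 1 * X 3} := by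
  have hrel : X 2 ^ 2 - X 1 * X 3 ∈ RingHom.ker (aeval ![E7Z₁, E7Z₂, E7Z₃, E7Z₄] :
      MvPolynomial (Fin 4) ℂ →ₐ[ℂ] MvPolynomial (Fin 10) ℂ) := by
    simp only [RingHom.mem_ker, map_sub, map_pow, map_mul, aeval_X]
    simp only [Matrix.cons_val, E7Z₂, E7Z₃, E7Z₄]
    ring
  rw [E7Z_eq_monomial] at hrel ⊢
  refine ker_aeval_monomial_one_eq expE7 ?_ redE7 monomial_sub_monomial_redE7_mem
    (injOn_sum_expE7.mono ?_)
  · exact (Ideal.span_singleton_le_iff_mem _).mpr hrel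
  · rintro _ ⟨e, rfl⟩
    exact redE7_apply_two_le e

/-- the ring of invariants of the `E₇` torus action on `S` is generated,
as a `ℂ`-subalgebra, by `Z₁, Z₂, Z₃, Z₄`; the kernel of the `ℂ`-algebra map
`ℂ[Z₁,Z₂,Z₃,Z₄] → S` sending the variables to these monomials is the principal ideal
`(Z₃² - Z₂Z₄)`; consequently the invariant ring is isomorphic to
`ℂ[Z₁,Z₂,Z₃,Z₄]/(Z₃² - Z₂Z₄)`. -/
theorem statement15 :
    invariants wE7 = Algebra.adjoin ℂ {E7Z₁, E7Z₂, E7Z₃, E7Z₄} ∧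
    RingHom.ker
        (MvPolynomial.aeval ![E7Z₁, E7Z₂, E7Z₃, E7Z₄] :
          MvPolynomial (Fin 4) ℂ →ₐ[ℂ] MvPolynomial (Fin 10) ℂ)
      = (Ideal.span {X 2 ^ 2 - X 1 * X 3} : Ideal (MvPolynomial (Fin 4) ℂ)) ∧
    Nonempty
      ((MvPolynomial (Fin 4) ℂ ⧸
          (Ideal.span {X 2 ^ 2 - X 1 * X 3} : Ideal (MvPolynomial (Fin 4) ℂ)))
        ≃ₐ[ℂ] invariants wE7) := by
  have hrange : (aeval ![E7Z₁, E7Z₂, E7Z₃, E7Z₄] :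
      MvPolynomial (Fin 4) ℂ →ₐ[ℂ] MvPolynomial (Fin 10) ℂ).range = invariants wE7 := by
    rw [E7Z_eq_monomial, invariants_eq_range_aeval_monomial_one wE7 expE7 weight_expE7
      exists_eq_sum_expE7]
  refine ⟨?_, ker_aeval_E7Z, ⟨(Ideal.quotientEquivAlgOfEq ℂ ker_aeval_E7Z.symm).trans <|
    (Ideal.quotientKerEquivRange _).trans (Subalgebra.equivOfEq _ _ hrange)⟩⟩
  rw [← hrange, ← Algebra.adjoin_range_eq_range_aeval]
  simp only [Matrix.range_cons, Matrix.range_empty, Set.union_empty, Set.singleton_union]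
end

section
/- Work in the polynomial ring S = ℂ[x₁, x₃, x₇, y₀, y₁, …, y₇] graded by ℤ⁸ with the E₈ weights. The invariant ring Sᵀ (the ℂ-subalgebra of polynomials each of whose monomials has weight 0) equals the ℂ-subalgebra generated by the three monomials Z₁ = x₁ y₀¹⁵ y₁⁸ y₂¹⁰ y₃⁵ y₄¹² y₅⁹ y₆⁶ y₇³, Z₂ = x₇ y₀⁶ y₁³ y₂⁴ y₃² y₄⁵ y₅⁴ y₆³ y₇², Z₃ = x₃ y₀¹⁰ y₁⁵ y₂⁷ y₃⁴ y₄⁸ y₅⁶ y₆⁴ y₇², and these three monomials are algebraically independent over ℂ; hence Sᵀ is isomorphic to the polynomial ring ℂ[Z₁, Z₂, Z₃]. -/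
/-!
In weight zero the exponents `a` of the `x`'s and `b` of the `y`'s satisfy `C b = a`, where `C` is
the Cartan matrix of `E₈` (the `y`-block of the weights is `-C`) and `a` is placed at the nodes
`1, 3, 7`. As `C` is unimodular and `C⁻¹` has nonnegative entries, `b = C⁻¹ a` is forced, so the
weight-zero exponents form the free commutative monoid on the exponents of `Z₁, Z₂, Z₃`, whose
`y`-parts are the columns `1, 7, 3` of `C⁻¹`. Hence the invariants are spanned by monomials in the
`Zᵢ`; and setting every `yⱼ = 1` sends the `Zᵢ` to distinct variables, which gives algebraic
independence.
-/

open MvPolynomial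

open MvPolynomial

/-- Weights of the torus action for the `E₈` singularity: the variables of
`S = ℂ[x₁, x₃, x₇, y₀, …, y₇]` are indexed by `Fin 11` with `0 ↦ x₁`, `1 ↦ x₃`,
`2 ↦ x₇`, `3+m ↦ y_m`; the rows below are `w(x₁) = e₁`, `w(x₃) = e₃`, `w(x₇) = e₇`,
`w(y₀) = -2e₀+e₁+e₂+e₄`, `w(y₁) = e₀-2e₁`, `w(y₂) = e₀-2e₂+e₃`, `w(y₃) = e₂-2e₃`,
`w(y₄) = e₀-2e₄+e₅`, `w(y₅) = e₄-2e₅+e₆`, `w(y₆) = e₅-2e₆+e₇`, `w(y₇) = e₆-2e₇`. -/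
def wE8 : Fin 11 → Fin 8 → ℤ :=
  ![![0, 1, 0, 0, 0, 0, 0, 0],
    ![0, 0, 0, 1, 0, 0, 0, 0],
    ![0, 0, 0, 0, 0, 0, 0, 1],
    ![-2, 1, 1, 0, 1, 0, 0, 0],
    ![1, -2, 0, 0, 0, 0, 0, 0],
    ![1, 0, -2, 1, 0, 0, 0, 0],
    ![0, 0, 1, -2, 0, 0, 0, 0],
    ![1, 0, 0, 0, -2, 1, 0, 0],
    ![0, 0, 0, 0, 1, -2, 1, 0],
    ![0, 0, 0, 0, 0, 1, -2, 1],
    ![0, 0, 0, 0, 0, 0, 1, -2]]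

/-- `Z₁ = x₁ y₀¹⁵ y₁⁸ y₂¹⁰ y₃⁵ y₄¹² y₅⁹ y₆⁶ y₇³`. -/
noncomputable def E8Z₁ : MvPolynomial (Fin 11) ℂ :=
  X 0 * X 3 ^ 15 * X 4 ^ 8 * X 5 ^ 10 * X 6 ^ 5 * X 7 ^ 12 * X 8 ^ 9 * X 9 ^ 6 * X 10 ^ 3

/-- `Z₂ = x₇ y₀⁶ y₁³ y₂⁴ y₃² y₄⁵ y₅⁴ y₆³ y₇²`. -/
noncomputable def E8Z₂ : MvPolynomial (Fin 11) ℂ :=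
  X 2 * X 3 ^ 6 * X 4 ^ 3 * X 5 ^ 4 * X 6 ^ 2 * X 7 ^ 5 * X 8 ^ 4 * X 9 ^ 3 * X 10 ^ 2

/-- `Z₃ = x₃ y₀¹⁰ y₁⁵ y₂⁷ y₃⁴ y₄⁸ y₅⁶ y₆⁴ y₇²`. -/
noncomputable def E8Z₃ : MvPolynomial (Fin 11) ℂ :=
  X 1 * X 3 ^ 10 * X 4 ^ 5 * X 5 ^ 7 * X 6 ^ 4 * X 7 ^ 8 * X 8 ^ 6 * X 9 ^ 4 * X 10 ^ 2

open Finsupp (weight weight_eq_sum equivFunOnFinite)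

lemma mem_invariants_iff_isWeightedHomogeneous {m n : ℕ} {w : Fin m → Fin n → ℤ}
    {p : MvPolynomial (Fin m) ℂ} : p ∈ invariants w ↔ IsWeightedHomogeneous w p 0 := by
  change (∀ d ∈ p.support, ∀ i, _) ↔ _
  simp only [IsWeightedHomogeneous, MvPolynomial.mem_support_iff, weight_eq_sum,
    _root_.funext_iff, Finset.sum_apply, nsmul_eq_mul, Pi.mul_apply, Pi.natCast_apply,
    Pi.zero_apply]

theorem invariants_eq_adjoin_monomial {m n : ℕ} {ι : Type*} [Fintype ι]
    {w : Fin m → Fin n → ℤ} (D : ι → Fin m →₀ ℕ) (hD : ∀ i, weight w (D i) = 0)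
    (hgen : ∀ d, weight w d = 0 → ∃ k : ι → ℕ, d = ∑ i, k i • D i) :
    invariants w = Algebra.adjoin ℂ (Set.range fun i => monomial (D i) (1 : ℂ)) := by
  apply le_antisymm
  · intro p hp
    rw [mem_invariants_iff_isWeightedHomogeneous] at hp
    rw [p.as_sum]
    refine Subalgebra.sum_mem _ fun d hd => ?_
    obtain ⟨k, rfl⟩ := hgen d (hp (MvPolynomial.mem_support_iff.mp hd))
    rw [← mul_one (coeff _ p), ← C_mul_monomial, monomial_sum_one]
    refine mul_mem (Subalgebra.algebraMap_mem _ _) (prod_mem fun i _ => ?_)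
    rw [show monomial (k i • D i) (1 : ℂ) = monomial (D i) 1 ^ k i by
      rw [monomial_pow, one_pow]]
    exact pow_mem (Algebra.subset_adjoin (Set.mem_range_self i)) _
  · rw [Algebra.adjoin_le_iff]
    rintro _ ⟨i, rfl⟩
    exact mem_invariants_iff_isWeightedHomogeneous.mpr
      (isWeightedHomogeneous_monomial _ _ _ (hD i))

noncomputable def e8Exponent : Fin 3 → Fin 11 →₀ ℕ := fun i =>
  equivFunOnFinite.symm
    (![![1, 0, 0, 15, 8, 10, 5, 12, 9, 6, 3],
       ![0, 0, 1, 6, 3, 4, 2, 5, 4, 3, 2],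
       ![0, 1, 0, 10, 5, 7, 4, 8, 6, 4, 2]] i)

lemma E8Z_eq_monomial : ![E8Z₁, E8Z₂, E8Z₃] = fun i => monomial (e8Exponent i) 1 := by
  funext i
  fin_cases i <;>
    simp only [E8Z₁, E8Z₂, E8Z₃, e8Exponent, monomial_eq, C_1, pow_zero, pow_one, one_mul,
      implies_true, Finsupp.prod_fintype, Finsupp.equivFunOnFinite_symm_apply_apply,
      Fin.prod_univ_succ, Finset.univ_unique, Finset.prod_singleton, Fin.isValue, Fin.zero_eta,
      Fin.mk_one, Fin.reduceFinMk, Matrix.cons_val, Matrix.cons_val_zero, Matrix.cons_val_one,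
      Matrix.cons_val_succ, Matrix.cons_val_fin_one, Fin.succ_zero_eq_one, Fin.succ_one_eq_two,
      Fin.reduceSucc, Fin.default_eq_zero] <;>
    ring

lemma weight_e8Exponent (i : Fin 3) : weight wE8 (e8Exponent i) = 0 := by
  fin_cases i <;> ext j <;> fin_cases j <;>
    simp [weight_eq_sum, Fin.sum_univ_succ, wE8, e8Exponent]

lemma eq_sum_smul_e8Exponent_of_weight_eq_zero {d : Fin 11 →₀ ℕ} (hd : weight wE8 d = 0) :
    d = ∑ i, ![d 0, d 2, d 1] i • e8Exponent i := by
  rw [_root_.funext_iff] at hd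
  simp only [wE8, weight_eq_sum, nsmul_eq_mul, Finset.sum_apply, Pi.mul_apply,
    Pi.natCast_apply, Matrix.cons_val', Matrix.cons_val_fin_one, Fin.sum_univ_succ, Fin.isValue,
    Matrix.cons_val_zero, Matrix.cons_val_succ, Fin.succ_zero_eq_one, Fin.succ_one_eq_two,
    Fin.reduceSucc, Finset.univ_unique, Fin.default_eq_zero, Finset.sum_singleton, Pi.zero_apply,
    Fin.forall_fin_succ, mul_zero, mul_neg, mul_one, add_zero, zero_add, forall_const] at hd
  obtain ⟨h0, h1, h2, h3, h4, h5, h6, h7⟩ := hd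
  ext j
  fin_cases j <;> simp [Fin.sum_univ_succ, e8Exponent] <;> omega

theorem invariants_wE8_eq_adjoin :
    invariants wE8 = Algebra.adjoin ℂ (Set.range ![E8Z₁, E8Z₂, E8Z₃]) := by
  rw [E8Z_eq_monomial]
  exact invariants_eq_adjoin_monomial e8Exponent weight_e8Exponent fun d hd =>
    ⟨_, eq_sum_smul_e8Exponent_of_weight_eq_zero hd⟩

theorem algebraicIndependent_E8Z : AlgebraicIndependent ℂ ![E8Z₁, E8Z₂, E8Z₃] := by
  let evalYOne : MvPolynomial (Fin 11) ℂ →ₐ[ℂ] MvPolynomial (Fin 3) ℂ :=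
    aeval ![X 0, X 2, X 1, 1, 1, 1, 1, 1, 1, 1, 1]
  have hX : evalYOne ∘ ![E8Z₁, E8Z₂, E8Z₃] = X := by
    funext i
    fin_cases i <;> simp [evalYOne, E8Z₁, E8Z₂, E8Z₃]
  exact .of_comp evalYOne (hX ▸ algebraicIndependent_X (Fin 3) ℂ)

/-- the ring of invariants of the `E₈` torus action on `S` is generated,
as a `ℂ`-subalgebra, by the three monomials `Z₁, Z₂, Z₃`, which are algebraically
independent over `ℂ`; hence the invariant ring is isomorphic to the polynomial ring
`ℂ[Z₁, Z₂, Z₃]`. -/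
theorem statement16 :
    invariants wE8 = Algebra.adjoin ℂ {E8Z₁, E8Z₂, E8Z₃} ∧
    AlgebraicIndependent ℂ ![E8Z₁, E8Z₂, E8Z₃] ∧
    Nonempty ((invariants wE8) ≃ₐ[ℂ] MvPolynomial (Fin 3) ℂ) := by
  have hgen := invariants_wE8_eq_adjoin
  refine ⟨?_, algebraicIndependent_E8Z,
    ⟨(Subalgebra.equivOfEq _ _ hgen).trans algebraicIndependent_E8Z.aevalEquiv.symm⟩⟩
  rw [hgen, Matrix.range_cons, Matrix.range_cons, Matrix.range_cons_empty, Set.singleton_union,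
    Set.singleton_union]
end

section
/- There is an isomorphism of ℂ-algebras ℂ[x, y, z]/(x⁴ + y³ + z²) ≅ ℂ[Z₁, Z₂, Z₃, Z₄]/(Z₂³ − Z₃Z₄, Z₁² + Z₃ + Z₄). In other words, the E₆ singularity {x⁴ + y³ + z² = 0} ⊂ ℂ³ is isomorphic to the intersection of the hypersurfaces {Z₂³ − Z₃Z₄ = 0} and {Z₁² + Z₃ + Z₄ = 0} in ℂ⁴. -/
/-!
On the intersection, `Z₄ = -Z₁² - Z₃`, so the remaining relation reads
`Z₂³ + Z₃(Z₃ + Z₁²) = Z₂³ + (Z₃ + Z₁²/2)² - Z₁⁴/4`. Since `α = (1 + i)/2` satisfies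
`α⁴ = -1/4`, the substitution `x ↦ αZ₁, y ↦ Z₂, z ↦ Z₃ + Z₁²/2` turns `x⁴ + y³ + z²` into this
relation; its inverse is `Z₁ ↦ (1 - i)x, Z₂ ↦ y, Z₃ ↦ z + ix², Z₄ ↦ ix² - z`. This works over any
commutative ring in which `2` is invertible and `-1` is a square.
-/

open MvPolynomial

namespace MvPolynomial

variable {R σ τ : Type*} [CommRing R]

theorem quotientMapₐ_aeval_comp_eq_id {I : Ideal (MvPolynomial σ R)}
    {J : Ideal (MvPolynomial τ R)} {p : σ → MvPolynomial τ R} {q : τ → MvPolynomial σ R}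
    (hp : I ≤ J.comap (aeval p)) (hq : J ≤ I.comap (aeval q))
    (hpq : ∀ j, aeval p (q j) - X j ∈ J) :
    (Ideal.quotientMapₐ (R₁ := R) J (aeval p) hp).comp
      (Ideal.quotientMapₐ (R₁ := R) I (aeval q) hq) = AlgHom.id R (MvPolynomial τ R ⧸ J) := by
  apply Ideal.Quotient.algHom_ext
  apply MvPolynomial.algHom_ext
  intro j
  simpa [Ideal.Quotient.eq] using hpq j

noncomputable def quotientAlgEquivOfAeval (I : Ideal (MvPolynomial σ R))
    (J : Ideal (MvPolynomial τ R)) (p : σ → MvPolynomial τ R) (q : τ → MvPolynomial σ R)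
    (hp : I ≤ J.comap (aeval p)) (hq : J ≤ I.comap (aeval q))
    (hpq : ∀ j, aeval p (q j) - X j ∈ J) (hqp : ∀ i, aeval q (p i) - X i ∈ I) :
    (MvPolynomial σ R ⧸ I) ≃ₐ[R] (MvPolynomial τ R ⧸ J) :=
  AlgEquiv.ofAlgHom _ _ (quotientMapₐ_aeval_comp_eq_id hp hq hpq)
    (quotientMapₐ_aeval_comp_eq_id hq hp hqp)

end MvPolynomial

section E6

variable (R : Type*) [CommRing R]

noncomputable abbrev e6Ideal : Ideal (MvPolynomial (Fin 3) R) :=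
  Ideal.span {X 0 ^ 4 + X 1 ^ 3 + X 2 ^ 2}

noncomputable abbrev e6IntersectionIdeal : Ideal (MvPolynomial (Fin 4) R) :=
  Ideal.span {X 1 ^ 3 - X 2 * X 3, X 0 ^ 2 + X 2 + X 3}

variable {R} {σ : Type*} {i : R}

theorem C_mul_C_of_mul_eq_neg_one (hi : i * i = -1) : (C i * C i : MvPolynomial σ R) = -1 := by
  rw [← C_mul, hi, C_neg, C_1]

noncomputable def intersectionToE6 (i : R) : Fin 4 → MvPolynomial (Fin 3) R :=
  ![C (1 - i) * X 0, X 1, X 2 + C i * X 0 ^ 2, C i * X 0 ^ 2 - X 2]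

theorem e6IntersectionIdeal_le_comap (hi : i * i = -1) :
    e6IntersectionIdeal R ≤ (e6Ideal R).comap (aeval (intersectionToE6 i)) := by
  have := C_mul_C_of_mul_eq_neg_one (σ := Fin 3) hi
  rw [Ideal.span_le, Set.insert_subset_iff, Set.singleton_subset_iff]
  simp only [SetLike.mem_coe, Ideal.mem_comap, Ideal.mem_span_singleton']
  refine ⟨⟨1, ?_⟩, ⟨0, ?_⟩⟩ <;>
    simp only [intersectionToE6, map_add, map_sub, map_mul, map_pow, aeval_X, Matrix.cons_val] <;>
    grind

variable [Invertible (2 : R)]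

theorem two_mul_C_invOf_two : (2 * C ⅟2 : MvPolynomial σ R) = 1 := by
  rw [← map_ofNat C 2, ← C_mul, mul_invOf_self, C_1]

noncomputable def e6ToIntersection (i : R) : Fin 3 → MvPolynomial (Fin 4) R :=
  ![C (⅟2 * (1 + i)) * X 0, X 1, X 2 + C ⅟2 * X 0 ^ 2]

theorem e6Ideal_le_comap (hi : i * i = -1) :
    e6Ideal R ≤ (e6IntersectionIdeal R).comap (aeval (e6ToIntersection i)) := by
  have := C_mul_C_of_mul_eq_neg_one (σ := Fin 4) hi
  have := two_mul_C_invOf_two (σ := Fin 4) (R := R)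
  rw [Ideal.span_le, Set.singleton_subset_iff, SetLike.mem_coe, Ideal.mem_comap,
    Ideal.mem_span_pair]
  refine ⟨1, X 2, ?_⟩
  simp only [e6ToIntersection, map_add, map_mul, map_pow, aeval_X, Matrix.cons_val]
  grind

theorem aeval_e6ToIntersection_intersectionToE6_sub_X_mem (hi : i * i = -1) (j : Fin 4) :
    aeval (e6ToIntersection i) (intersectionToE6 i j) - X j ∈ e6IntersectionIdeal R := by
  have := C_mul_C_of_mul_eq_neg_one (σ := Fin 4) hi
  have := two_mul_C_invOf_two (σ := Fin 4) (R := R)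
  rw [Ideal.mem_span_pair]
  fin_cases j <;> [use 0, 0; use 0, 0; use 0, 0; use 0, -1] <;>
    simp only [intersectionToE6, e6ToIntersection, map_add, map_sub, map_mul, map_pow, aeval_X,
      aeval_C, algebraMap_eq, Matrix.cons_val, Fin.reduceFinMk] <;>
    grind

theorem aeval_intersectionToE6_e6ToIntersection_sub_X_mem (hi : i * i = -1) (j : Fin 3) :
    aeval (intersectionToE6 i) (e6ToIntersection i j) - X j ∈ e6Ideal R := by
  have := C_mul_C_of_mul_eq_neg_one (σ := Fin 3) hi
  have := two_mul_C_invOf_two (σ := Fin 3) (R := R)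
  rw [Ideal.mem_span_singleton']
  fin_cases j <;> use 0 <;>
    simp only [intersectionToE6, e6ToIntersection, map_add, map_sub, map_mul, map_pow, aeval_X,
      aeval_C, algebraMap_eq, Matrix.cons_val, Fin.reduceFinMk] <;>
    grind

noncomputable def e6AlgEquivIntersection (hi : i * i = -1) :
    (MvPolynomial (Fin 3) R ⧸ e6Ideal R) ≃ₐ[R] (MvPolynomial (Fin 4) R ⧸ e6IntersectionIdeal R) :=
  quotientAlgEquivOfAeval _ _ _ _ (e6Ideal_le_comap hi) (e6IntersectionIdeal_le_comap hi)
    (aeval_e6ToIntersection_intersectionToE6_sub_X_mem hi)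
    (aeval_intersectionToE6_e6ToIntersection_sub_X_mem hi)

end E6

/-- the `E₆` singularity `{x⁴ + y³ + z² = 0} ⊂ ℂ³` is isomorphic to the
intersection `{Z₂³ - Z₃Z₄ = 0} ∩ {Z₁² + Z₃ + Z₄ = 0} ⊂ ℂ⁴`: their coordinate rings are
isomorphic as `ℂ`-algebras.  (Here `x, y, z` are `X 0, X 1, X 2` and `Z₁, Z₂, Z₃, Z₄`
are `X 0, X 1, X 2, X 3`.) -/
theorem statement17 :
    Nonempty
      ((MvPolynomial (Fin 3) ℂ ⧸
          (Ideal.span {X 0 ^ 4 + X 1 ^ 3 + X 2 ^ 2} : Ideal (MvPolynomial (Fin 3) ℂ)))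
        ≃ₐ[ℂ]
      (MvPolynomial (Fin 4) ℂ ⧸
          (Ideal.span {X 1 ^ 3 - X 2 * X 3, X 0 ^ 2 + X 2 + X 3} :
            Ideal (MvPolynomial (Fin 4) ℂ)))) :=
  ⟨e6AlgEquivIntersection Complex.I_mul_I⟩
end

section
/- There is an isomorphism of ℂ-algebras ℂ[x, y, z]/(x³y + y³ + z²) ≅ ℂ[Z₁, Z₂, Z₃, Z₄]/(Z₃² − Z₂Z₄, Z₁³ + Z₂ + Z₄²). In other words, the E₇ singularity {x³y + y³ + z² = 0} ⊂ ℂ³ is isomorphic to the intersection of the hypersurfaces {Z₃² − Z₂Z₄ = 0} and {Z₁³ + Z₂ + Z₄² = 0} in ℂ⁴. -/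
/-!
The second equation says `Z₂ = -(Z₁³ + Z₄²)`; substituting this into the first gives
`Z₃² + Z₁³Z₄ + Z₄³ = 0`, the `E₇` equation in `(x, y, z) = (Z₁, Z₄, Z₃)`. So `x ↦ Z₁, y ↦ Z₄,
z ↦ Z₃` and `Z₁ ↦ x, Z₂ ↦ -(x³ + y²), Z₃ ↦ z, Z₄ ↦ y` induce mutually inverse maps of the
quotients, over any commutative ring.
-/

open MvPolynomial

namespace Ideal

variable {R A B : Type*} [CommRing R] [CommRing A] [CommRing B] [Algebra R A] [Algebra R B]
  {I : Ideal A} {J : Ideal B}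

def quotientAlgEquivOfCompEq (f : A →ₐ[R] B) (g : B →ₐ[R] A)
    (hf : I ≤ J.comap f) (hg : J ≤ I.comap g)
    (hgf : (Quotient.mkₐ R I).comp (g.comp f) = Quotient.mkₐ R I)
    (hfg : (Quotient.mkₐ R J).comp (f.comp g) = Quotient.mkₐ R J) :
    (A ⧸ I) ≃ₐ[R] (B ⧸ J) :=
  AlgEquiv.ofAlgHom (quotientMapₐ J f hf) (quotientMapₐ I g hg)
    (Quotient.algHom_ext R hfg) (Quotient.algHom_ext R hgf)

end Ideal

noncomputable section E7

variable (R : Type*) [CommRing R]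

abbrev e7Ideal : Ideal (MvPolynomial (Fin 3) R) :=
  Ideal.span {X 0 ^ 3 * X 1 + X 1 ^ 3 + X 2 ^ 2}

abbrev e7CompleteIntersection : Ideal (MvPolynomial (Fin 4) R) :=
  Ideal.span {X 2 ^ 2 - X 1 * X 3, X 0 ^ 3 + X 1 + X 3 ^ 2}

def e7Embed : MvPolynomial (Fin 3) R →ₐ[R] MvPolynomial (Fin 4) R :=
  aeval ![X 0, X 3, X 2]

def e7Project : MvPolynomial (Fin 4) R →ₐ[R] MvPolynomial (Fin 3) R :=
  aeval ![X 0, -(X 0 ^ 3 + X 1 ^ 2), X 2, X 1]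

variable {R}

@[simp] lemma e7Embed_X (i : Fin 3) : e7Embed R (X i) = ![X 0, X 3, X 2] i := aeval_X _ _

@[simp] lemma e7Project_X (i : Fin 4) :
    e7Project R (X i) = ![X 0, -(X 0 ^ 3 + X 1 ^ 2), X 2, X 1] i := aeval_X _ _

variable (R)

lemma e7Embed_e7Polynomial :
    e7Embed R (X 0 ^ 3 * X 1 + X 1 ^ 3 + X 2 ^ 2) = X 0 ^ 3 * X 3 + X 3 ^ 3 + X 2 ^ 2 := by
  simp only [map_add, map_mul, map_pow, e7Embed_X, Matrix.cons_val]

lemma e7Project_binomial :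
    e7Project R (X 2 ^ 2 - X 1 * X 3) = X 0 ^ 3 * X 1 + X 1 ^ 3 + X 2 ^ 2 := by
  simp only [map_sub, map_mul, map_pow, e7Project_X, Matrix.cons_val]
  ring

lemma e7Project_cubic : e7Project R (X 0 ^ 3 + X 1 + X 3 ^ 2) = 0 := by
  simp only [map_add, map_pow, e7Project_X, Matrix.cons_val]
  ring

lemma e7Ideal_le_comap_e7Embed :
    e7Ideal R ≤ (e7CompleteIntersection R).comap (e7Embed R) := by
  rw [Ideal.span_le, Set.singleton_subset_iff, SetLike.mem_coe, Ideal.mem_comap,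
    e7Embed_e7Polynomial, Ideal.mem_span_pair]
  exact ⟨1, X 3, by ring⟩

lemma e7CompleteIntersection_le_comap_e7Project :
    e7CompleteIntersection R ≤ (e7Ideal R).comap (e7Project R) := by
  rw [Ideal.span_le, Set.insert_subset_iff, Set.singleton_subset_iff, SetLike.mem_coe,
    SetLike.mem_coe, Ideal.mem_comap, Ideal.mem_comap, e7Project_binomial, e7Project_cubic]
  exact ⟨Ideal.subset_span rfl, Ideal.zero_mem _⟩

lemma e7Project_comp_e7Embed : (e7Project R).comp (e7Embed R) = AlgHom.id R _ := by
  ext i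
  fin_cases i <;> simp

lemma e7Embed_e7Project_X_one :
    e7Embed R (e7Project R (X 1)) = X 1 - (X 0 ^ 3 + X 1 + X 3 ^ 2) := by
  simp only [e7Project_X, map_neg, map_add, map_pow, e7Embed_X, Matrix.cons_val]
  ring

lemma e7Embed_comp_e7Project :
    (Ideal.Quotient.mkₐ R (e7CompleteIntersection R)).comp ((e7Embed R).comp (e7Project R)) =
      Ideal.Quotient.mkₐ R (e7CompleteIntersection R) := by
  ext i
  fin_cases i
  · simp
  · change Ideal.Quotient.mk _ (e7Embed R (e7Project R (X 1))) = Ideal.Quotient.mk _ (X 1)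
    rw [Ideal.Quotient.mk_eq_mk_iff_sub_mem, e7Embed_e7Project_X_one, sub_sub_cancel_left]
    exact neg_mem (Ideal.subset_span (by simp))
  · simp
  · simp

def e7AlgEquiv :
    (MvPolynomial (Fin 3) R ⧸ e7Ideal R) ≃ₐ[R]
      (MvPolynomial (Fin 4) R ⧸ e7CompleteIntersection R) :=
  Ideal.quotientAlgEquivOfCompEq (e7Embed R) (e7Project R)
    (e7Ideal_le_comap_e7Embed R) (e7CompleteIntersection_le_comap_e7Project R)
    (by rw [e7Project_comp_e7Embed, AlgHom.comp_id]) (e7Embed_comp_e7Project R)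

end E7

/-- the `E₇` singularity `{x³y + y³ + z² = 0} ⊂ ℂ³` is isomorphic to the
intersection `{Z₃² - Z₂Z₄ = 0} ∩ {Z₁³ + Z₂ + Z₄² = 0} ⊂ ℂ⁴`: their coordinate rings
are isomorphic as `ℂ`-algebras.  (Here `x, y, z` are `X 0, X 1, X 2` and
`Z₁, Z₂, Z₃, Z₄` are `X 0, X 1, X 2, X 3`.) -/
theorem statement18 :
    Nonempty
      ((MvPolynomial (Fin 3) ℂ ⧸
          (Ideal.span {X 0 ^ 3 * X 1 + X 1 ^ 3 + X 2 ^ 2} : Ideal (MvPolynomial (Fin 3) ℂ)))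
        ≃ₐ[ℂ]
      (MvPolynomial (Fin 4) ℂ ⧸
          (Ideal.span {X 2 ^ 2 - X 1 * X 3, X 0 ^ 3 + X 1 + X 3 ^ 2} :
            Ideal (MvPolynomial (Fin 4) ℂ)))) :=
  ⟨e7AlgEquiv ℂ⟩
end
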